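/- Let n ≥ 1 and let p ∈ ℝ^n ⊆ ℂ^n with ‖p‖ = 1. (a) For every a ∈ [0, 1] and every ε ∈ {1, −1}, the point z·p ∈ ℂ^n with z = a + 2εi·a·√(1 − a²) lies in the image W(S^n_1) of the Whitney sphere of radius 1; explicitly z·p = W(y) for y = (ε√(1 − a²), a·p_1, …, a·p_n) ∈ S^n_1. (b) The two-dimensional Lebesgue measure of the teardrop domain D_α = {z ∈ ℂ : 0 ≤ Re z ≤ 1 and |Im z| ≤ 2·Re z·√(1 − (Re z)²)} equals 4/3. (The linear holomorphic map z ↦ z·p is a teardrop with boundary on the Whitney sphere, of area 4/3.) -/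

import Mathlib

open scoped BigOperators

/-- The Whitney sphere parameterization `W : ℝ^{n+1} → ℂ^n`,
`W(x)_j = x_j + 2i·x_0·x_j` for `1 ≤ j ≤ n`. -/
noncomputable def whitney (n : ℕ) (x : EuclideanSpace ℝ (Fin (n + 1))) : Fin n → ℂ :=
  fun j => (x j.succ : ℂ) + 2 * Complex.I * (x 0 : ℂ) * (x j.succ : ℂ)

/-!
For (a), `‖y‖² = ε²(1 - a²) + a²‖p‖² = 1` and `W(y)_j = (1 + 2i·y₀)·a·p_j`.
For (b), the teardrop is the closed region between the graphs of `∓2x√(1 - x²)` over `[0, 1]`,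
so by Fubini its area is `∫₀¹ 4x√(1 - x²) dx = [-(4/3)(1 - x²)^(3/2)]₀¹ = 4/3`.
-/

open Set MeasureTheory

section WhitneyLift

variable {n : ℕ} {a ε : ℝ} {p : EuclideanSpace ℝ (Fin n)} {y : EuclideanSpace ℝ (Fin (n + 1))}

theorem whitney_eq_of_apply_eq_cases
    (hy : ∀ i, y i = Fin.cases (ε * √(1 - a ^ 2)) (fun j => a * p j) i) :
    whitney n y = fun j => ((a : ℂ) + 2 * ε * Complex.I * a * (√(1 - a ^ 2) : ℝ)) * p j := by
  funext j
  simp only [whitney, hy, Fin.cases_zero, Fin.cases_succ]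
  push_cast
  ring

theorem norm_eq_one_of_apply_eq_cases (ha : a ^ 2 ≤ 1) (hε : ε ^ 2 = 1) (hp : ‖p‖ = 1)
    (hy : ∀ i, y i = Fin.cases (ε * √(1 - a ^ 2)) (fun j => a * p j) i) :
    ‖y‖ = 1 := by
  have hsq : ‖y‖ ^ 2 = 1 :=
    calc ‖y‖ ^ 2 = ε ^ 2 * √(1 - a ^ 2) ^ 2 + a ^ 2 * ∑ j, p j ^ 2 := by
          simp only [EuclideanSpace.real_norm_sq_eq, Fin.sum_univ_succ, hy, Fin.cases_zero,
            Fin.cases_succ, mul_pow, Finset.mul_sum]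
      _ = 1 := by
          rw [← EuclideanSpace.real_norm_sq_eq, hp, hε, Real.sq_sqrt (by linarith)]
          ring
  exact (pow_eq_one_iff_of_nonneg (norm_nonneg y) two_ne_zero).mp hsq

end WhitneyLift

theorem volume_region_between_cc_eq_lintegral {α : Type*} [MeasurableSpace α] {μ : Measure α}
    {f g : α → ℝ} {s : Set α} (hf : Measurable f) (hg : Measurable g) (hs : MeasurableSet s) :
    μ.prod volume {q : α × ℝ | q.1 ∈ s ∧ q.2 ∈ Icc (f q.1) (g q.1)} =
      ∫⁻ x in s, ENNReal.ofReal (g x - f x) ∂μ := by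
  classical
  rw [Measure.prod_apply (measurableSet_region_between_cc hf hg hs), ← lintegral_indicator hs]
  congr 1
  funext x
  by_cases hx : x ∈ s
  · rw [indicator_of_mem hx, ← Real.volume_Icc]
    congr 1
    ext
    simp [hx]
  · simp [hx]

theorem integral_mul_sqrt_one_sub_sq : ∫ x in (0 : ℝ)..1, x * √(1 - x ^ 2) = 1 / 3 := by
  have hderiv : ∀ x ∈ uIcc (0 : ℝ) 1,
      HasDerivAt (fun t : ℝ => -(1 / 3) * (1 - t ^ 2) ^ (3 / 2 : ℝ)) (x * √(1 - x ^ 2)) x := by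
    intro x hx
    have h := (((hasDerivAt_pow 2 x).const_sub 1).rpow_const (p := 3 / 2)
      (Or.inr (by norm_num))).const_mul (-(1 / 3) : ℝ)
    refine h.congr_deriv ?_
    rw [Real.sqrt_eq_rpow]
    norm_num
    ring
  rw [intervalIntegral.integral_eq_sub_of_hasDerivAt hderiv
    ((by fun_prop : Continuous _).intervalIntegrable _ _)]
  norm_num

theorem volume_teardrop :
    volume {z : ℂ | 0 ≤ z.re ∧ z.re ≤ 1 ∧ |z.im| ≤ 2 * z.re * √(1 - z.re ^ 2)} =
      ENNReal.ofReal (4 / 3) := by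
  set f : ℝ → ℝ := fun x => 2 * x * √(1 - x ^ 2)
  have hf : Continuous f := by fun_prop
  have hpre : {z : ℂ | 0 ≤ z.re ∧ z.re ≤ 1 ∧ |z.im| ≤ 2 * z.re * √(1 - z.re ^ 2)} =
      Complex.measurableEquivRealProd ⁻¹' {q | q.1 ∈ Icc 0 1 ∧ q.2 ∈ Icc (-f q.1) (f q.1)} := by
    ext z
    simp [f, Complex.measurableEquivRealProd, abs_le, and_assoc]
  have hf' : Measurable fun x => -f x := hf.measurable.neg
  rw [hpre, Complex.volume_preserving_equiv_real_prod.measure_preimage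
      (measurableSet_region_between_cc hf' hf.measurable measurableSet_Icc).nullMeasurableSet,
    Measure.volume_eq_prod,
    volume_region_between_cc_eq_lintegral hf' hf.measurable measurableSet_Icc,
    ← ofReal_integral_eq_lintegral_ofReal]
  · rw [integral_Icc_eq_integral_Ioc, ← intervalIntegral.integral_of_le zero_le_one]
    calc ENNReal.ofReal (∫ x in (0 : ℝ)..1, f x - -f x)
        = ENNReal.ofReal (4 * ∫ x in (0 : ℝ)..1, x * √(1 - x ^ 2)) := by
          rw [← intervalIntegral.integral_const_mul]
          congr 2 with x
          ring
      _ = ENNReal.ofReal (4 / 3) := by rw [integral_mul_sqrt_one_sub_sq]; norm_num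
  · exact (by fun_prop : Continuous fun x => f x - -f x).integrableOn_Icc
  · refine (ae_restrict_iff' measurableSet_Icc).mpr (.of_forall fun x hx => ?_)
    have : 0 ≤ f x := mul_nonneg (by linarith [hx.1]) (Real.sqrt_nonneg _)
    simp only [Pi.zero_apply]
    linarith

theorem stmt16_general (n : ℕ)
    (p : EuclideanSpace ℝ (Fin n)) (hp : ‖p‖ = 1) :
    (∀ a ∈ Set.Icc (0 : ℝ) 1, ∀ ε : ℝ, (ε = 1 ∨ ε = -1) →
      ∀ y : EuclideanSpace ℝ (Fin (n + 1)),
        (∀ i : Fin (n + 1),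
          y i = Fin.cases (ε * Real.sqrt (1 - a ^ 2)) (fun j => a * p j) i) →
        ‖y‖ = 1 ∧
          whitney n y = fun j =>
            ((a : ℂ) + 2 * (ε : ℂ) * Complex.I * (a : ℂ) * (Real.sqrt (1 - a ^ 2) : ℂ)) *
              (p j : ℂ)) ∧
    MeasureTheory.volume
      {z : ℂ | 0 ≤ z.re ∧ z.re ≤ 1 ∧ |z.im| ≤ 2 * z.re * Real.sqrt (1 - z.re ^ 2)} =
      ENNReal.ofReal (4 / 3) := by
  refine ⟨fun a ha ε hε y hy => ⟨?_, whitney_eq_of_apply_eq_cases hy⟩, volume_teardrop⟩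
  refine norm_eq_one_of_apply_eq_cases ?_ ?_ hp hy
  · nlinarith [ha.1, ha.2]
  · rcases hε with rfl | rfl <;> norm_num

/-- The linear holomorphic map `z ↦ z·p` is a teardrop with boundary on the radius-1 Whitney
sphere, of area `4/3`: (a) for `a ∈ [0,1]`, `ε = ±1`, the boundary point `z·p` with
`z = a + 2εi·a·√(1−a²)` equals `W(y)` for `y = (ε√(1−a²), a·p₁, …, a·pₙ) ∈ S^n_1`; (b) the
teardrop domain has Lebesgue measure `4/3`. -/
theorem stmt16 (n : ℕ) (hn : 1 ≤ n)
    (p : EuclideanSpace ℝ (Fin n)) (hp : ‖p‖ = 1) :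
    (∀ a ∈ Set.Icc (0 : ℝ) 1, ∀ ε : ℝ, (ε = 1 ∨ ε = -1) →
      ∀ y : EuclideanSpace ℝ (Fin (n + 1)),
        (∀ i : Fin (n + 1),
          y i = Fin.cases (ε * Real.sqrt (1 - a ^ 2)) (fun j => a * p j) i) →
        ‖y‖ = 1 ∧
          whitney n y = fun j =>
            ((a : ℂ) + 2 * (ε : ℂ) * Complex.I * (a : ℂ) * (Real.sqrt (1 - a ^ 2) : ℂ)) *
              (p j : ℂ)) ∧
    MeasureTheory.volume
      {z : ℂ | 0 ≤ z.re ∧ z.re ≤ 1 ∧ |z.im| ≤ 2 * z.re * Real.sqrt (1 - z.re ^ 2)} =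
      ENNReal.ofReal (4 / 3) :=
  stmt16_general n p hp
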